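/- arXiv:2510.15464 — 10 statements merged into one kernel-verified Lean document; each statement's English description precedes it below -/
import Mathlib

section
/- In the weighted-majority update on a finite hypothesis class S of set-valued functions σ: X → 2^Y, suppose at round t the prediction ŷ_t maximizes over y the total weight of hypotheses σ with y ∈ σ(x_t), and the update sets w^{t+1}(σ) = 0 if y_t ∉ σ(x_t), w^{t+1}(σ) = w^t(σ) if both y_t, ŷ_t ∈ σ(x_t), and w^{t+1}(σ) = 2 w^t(σ) if y_t ∈ σ(x_t) and ŷ_t ∉ σ(x_t). Then the total weight W_{t+1} = Σ_σ w^{t+1}(σ) satisfies W_{t+1} ≤ W_t. -/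
/-!
Let `A` (resp. `B`) be the hypotheses containing the demonstration `y_t` (resp. the prediction
`ŷ_t`). The update keeps `A ∩ B`, doubles `A \ B` and zeroes the rest, so it gains at most
`w(A \ B)` and loses at least `w(B \ A)`. Since `ŷ_t` maximizes the weight, `w(A) ≤ w(B)`,
i.e. `w(A \ B) ≤ w(B \ A)`.
-/

open Finset

section MajorityUpdate

variable {ι : Type*} [DecidableEq ι]

def majorityUpdate (s t : Finset ι) (w : ι → ℝ) (i : ι) : ℝ :=
  if i ∉ s then 0 else if i ∈ t then w i else 2 * w i

lemma majorityUpdate_add_le (s t : Finset ι) {w : ι → ℝ} {i : ι} (hw : 0 ≤ w i) :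
    majorityUpdate s t w i + (if i ∈ t \ s then w i else 0)
      ≤ w i + (if i ∈ s \ t then w i else 0) := by
  unfold majorityUpdate
  by_cases hs : i ∈ s <;> by_cases ht : i ∈ t <;> simp [hs, ht, hw, two_mul]

lemma sum_majorityUpdate_le [Fintype ι] {s t : Finset ι} {w : ι → ℝ} (hw : ∀ i, 0 ≤ w i)
    (hst : ∑ i ∈ s, w i ≤ ∑ i ∈ t, w i) :
    ∑ i, majorityUpdate s t w i ≤ ∑ i, w i := by
  have hsum := sum_le_sum fun i (_ : i ∈ univ) => majorityUpdate_add_le s t (hw i)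
  simp only [sum_add_distrib, sum_ite_mem, univ_inter] at hsum
  linarith [sum_sdiff_le_sum_sdiff.mpr hst]

end MajorityUpdate

/-- Weighted-majority update: total weight is non-increasing. -/
theorem stmt0 {H X Y : Type*} [Fintype H] [DecidableEq Y]
    (σ : H → X → Finset Y) (w : H → ℝ) (hw : ∀ h, 0 ≤ w h)
    (x : X) (yhat yt : Y)
    (hmax : ∀ y : Y, ∑ h ∈ Finset.univ.filter (fun h => y ∈ σ h x), w h
      ≤ ∑ h ∈ Finset.univ.filter (fun h => yhat ∈ σ h x), w h)
    (w' : H → ℝ)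
    (hupd : ∀ h, w' h = if yt ∉ σ h x then 0
      else if yhat ∈ σ h x then w h else 2 * w h) :
    ∑ h, w' h ≤ ∑ h, w h := by
  classical
  have hw' : w' = majorityUpdate (univ.filter fun h => yt ∈ σ h x)
      (univ.filter fun h => yhat ∈ σ h x) w :=
    funext fun h => by simp [hupd, majorityUpdate]
  exact hw' ▸ sum_majorityUpdate_le hw (hmax yt)
end

section
/- Consider the online process where at each round t the learner receives x_t, outputs ŷ_t = argmax_y Σ_{σ: y∈σ(x_t)} w^t(σ), receives y_t, then zeroes weights of σ with y_t ∉ σ(x_t) and doubles weights of σ with y_t ∈ σ(x_t) and ŷ_t ∉ σ(x_t). If there exists σ* ∈ S with y_t ∈ σ*(x_t) for all t, then over any number of rounds the number of indices t with ŷ_t ∉ σ*(x_t) is at most log₂|S|. -/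
/-!
The realizing hypothesis is never zeroed, and it is doubled exactly at the rounds where the
prediction misses it, so after `T` rounds its weight is `2 ^ M`, `M` the number of mistakes.
The total weight starts at `|S|` and never increases: the weight doubled (hypotheses consistent
with `y_t` but missing `ŷ_t`) is at most the weight zeroed (hypotheses containing `ŷ_t` but not
`y_t`), because `ŷ_t` maximizes the weight of the hypotheses containing it. Hence `2 ^ M ≤ |S|`.
-/

open Finset

namespace DoublingUpdate

variable {ι : Type*} [DecidableEq ι] {A B : ℕ → Finset ι} {w : ℕ → ι → ℝ}

lemma sum_step_le [Fintype ι] {A B : Finset ι} {w w' : ι → ℝ}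
    (hw : ∀ i, 0 ≤ w i) (hAB : ∑ i ∈ A, w i ≤ ∑ i ∈ B, w i)
    (hw' : ∀ i, w' i = if i ∉ A then 0 else if i ∈ B then w i else 2 * w i) :
    ∑ i, w' i ≤ ∑ i, w i := by
  have pointwise : ∀ i, w' i + (if i ∈ B \ A then w i else 0)
      ≤ w i + (if i ∈ A \ B then w i else 0) := by
    intro i
    rw [hw']
    by_cases hA : i ∈ A <;> by_cases hB : i ∈ B <;> simp [hA, hB, hw i, two_mul]
  have hsum := sum_le_sum fun i (_ : i ∈ univ) => pointwise i
  simp only [sum_add_distrib, sum_ite_mem, univ_inter] at hsum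
  linarith [sum_sdiff_le_sum_sdiff.mpr hAB]

variable (hupd : ∀ t i, w (t + 1) i =
  if i ∉ A t then 0 else if i ∈ B t then w t i else 2 * w t i)
include hupd

lemma weight_nonneg (h0 : ∀ i, 0 ≤ w 0 i) (t : ℕ) (i : ι) : 0 ≤ w t i := by
  induction t generalizing i with
  | zero => exact h0 i
  | succ t ih => rw [hupd]; split_ifs <;> linarith [ih i]

lemma sum_weight_le [Fintype ι] (h0 : ∀ i, 0 ≤ w 0 i)
    (hAB : ∀ t, ∑ i ∈ A t, w t i ≤ ∑ i ∈ B t, w t i) (t : ℕ) :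
    ∑ i, w t i ≤ ∑ i, w 0 i := by
  induction t with
  | zero => rfl
  | succ t ih =>
    exact (sum_step_le (weight_nonneg hupd h0 t) (hAB t) (hupd t)).trans ih

lemma weight_eq_of_forall_mem {i : ι} (hi : ∀ t, i ∈ A t) (t : ℕ) :
    w t i = w 0 i * 2 ^ #{s ∈ range t | i ∉ B s} := by
  induction t with
  | zero => simp
  | succ t ih =>
    rw [hupd, if_neg (not_not.mpr (hi t)), range_add_one, filter_insert]
    by_cases hB : i ∈ B t
    · simp [hB, ih]
    · rw [if_neg hB, if_pos hB, card_insert_of_notMem (by simp), ih]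
      ring

end DoublingUpdate

theorem stmt1_general {H X Y : Type*} [Fintype H] [DecidableEq Y]
    (σ : H → X → Finset Y) (x : ℕ → X) (y : ℕ → Y) (yhat : ℕ → Y)
    (w : ℕ → H → ℝ)
    (hw1 : ∀ h, w 0 h = 1)
    (hmax : ∀ t (z : Y), ∑ h ∈ Finset.univ.filter (fun h => z ∈ σ h (x t)), w t h
      ≤ ∑ h ∈ Finset.univ.filter (fun h => yhat t ∈ σ h (x t)), w t h)
    (hupd : ∀ t h, w (t + 1) h = if y t ∉ σ h (x t) then 0
      else if yhat t ∈ σ h (x t) then w t h else 2 * w t h)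
    (hstar : H) (hreal : ∀ t, y t ∈ σ hstar (x t))
    (T : ℕ) :
    (((Finset.range T).filter (fun t => yhat t ∉ σ hstar (x t))).card : ℝ)
      ≤ Real.logb 2 (Fintype.card H) := by
  classical
  have hupd_filter : ∀ t h, w (t + 1) h =
      if h ∉ univ.filter (fun h => y t ∈ σ h (x t)) then 0
      else if h ∈ univ.filter (fun h => yhat t ∈ σ h (x t)) then w t h else 2 * w t h := by
    simpa only [mem_filter, mem_univ, true_and] using hupd
  have h0 : ∀ h, 0 ≤ w 0 h := fun h => (hw1 h).symm ▸ zero_le_one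
  have hstar_weight := DoublingUpdate.weight_eq_of_forall_mem hupd_filter
    (fun t => by simpa using hreal t) T
  have hpow : (2 : ℝ) ^ #{t ∈ range T | yhat t ∉ σ hstar (x t)} ≤ Fintype.card H :=
    calc (2 : ℝ) ^ #{t ∈ range T | yhat t ∉ σ hstar (x t)} = w T hstar := by
          simpa [hw1] using hstar_weight.symm
      _ ≤ ∑ h, w T h :=
          single_le_sum (fun h _ => DoublingUpdate.weight_nonneg hupd_filter h0 T h)
            (mem_univ hstar)
      _ ≤ ∑ h, w 0 h := DoublingUpdate.sum_weight_le hupd_filter h0 (fun t => hmax t (y t)) T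
      _ = Fintype.card H := by simp [hw1]
  rw [Real.le_logb_iff_rpow_le one_lt_two (lt_of_lt_of_le (by positivity) hpow),
    Real.rpow_natCast]
  exact hpow

/-- Mistake bound log₂|S| for the mistake-unaware weight-update rule. -/
theorem stmt1 {H X Y : Type*} [Fintype H] [Nonempty H] [DecidableEq Y]
    (σ : H → X → Finset Y) (x : ℕ → X) (y : ℕ → Y) (yhat : ℕ → Y)
    (w : ℕ → H → ℝ)
    (hw1 : ∀ h, w 0 h = 1)
    (hmax : ∀ t (z : Y), ∑ h ∈ Finset.univ.filter (fun h => z ∈ σ h (x t)), w t h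
      ≤ ∑ h ∈ Finset.univ.filter (fun h => yhat t ∈ σ h (x t)), w t h)
    (hupd : ∀ t h, w (t + 1) h = if y t ∉ σ h (x t) then 0
      else if yhat t ∈ σ h (x t) then w t h else 2 * w t h)
    (hstar : H) (hreal : ∀ t, y t ∈ σ hstar (x t))
    (T : ℕ) :
    (((Finset.range T).filter (fun t => yhat t ∉ σ hstar (x t))).card : ℝ)
      ≤ Real.logb 2 (Fintype.card H) :=
  stmt1_general σ x y yhat w hw1 hmax hupd hstar hreal T
end

section
/- Let D be a distribution on X, π* and π̂ be conditional distributions (policies) mapping X to distributions on a countable set Y, and let σ(x) := supp π*(·|x). Then the loss L(π̂) := E_{x∼D} Pr_{ŷ∼π̂(·|x)}[ŷ ∉ σ(x)] satisfies L(π̂) ≤ D_H²(D × π*, D × π̂), where D × π denotes the joint distribution on X × Y with marginal D and conditional π. -/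
/-!
On a point `(x, y)` with `π*(y|x) = 0` the Hellinger integrand `(√(D π*) - √(D π̂))²`
equals `D(x) π̂(y|x)`, which is exactly the loss integrand there; everywhere else the loss
integrand vanishes. Summing this pointwise bound over `X × Y` gives the claim.
-/

lemma summable_of_tsum_ne_zero {ι α : Type*} [AddCommMonoid α] [TopologicalSpace α]
    {f : ι → α} (h : ∑' i, f i ≠ 0) : Summable f := by
  by_contra hf
  exact h (tsum_eq_zero_of_not_summable hf)

lemma summable_mul_kernel {X Y : Type*} {D : X → ℝ} {π : X → Y → ℝ}
    (hD : ∀ x, 0 ≤ D x) (hDs : Summable D)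
    (hπ0 : ∀ x y, 0 ≤ π x y) (hπ1 : ∀ x, ∑' y, π x y = 1) :
    Summable fun p : X × Y => D p.1 * π p.1 p.2 := by
  rw [summable_prod_of_nonneg fun p => mul_nonneg (hD p.1) (hπ0 p.1 p.2)]
  refine ⟨fun x => (summable_of_tsum_ne_zero (by simp [hπ1 x])).mul_left (D x), ?_⟩
  simpa only [tsum_mul_left, hπ1, mul_one] using hDs

lemma sq_sqrt_sub_sqrt_le_add {a b : ℝ} (ha : 0 ≤ a) (hb : 0 ≤ b) :
    (√a - √b) ^ 2 ≤ a + b := by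
  nlinarith [Real.sq_sqrt ha, Real.sq_sqrt hb,
    mul_nonneg (Real.sqrt_nonneg a) (Real.sqrt_nonneg b)]

lemma mul_ite_zero_le_sq_sqrt_sub_sqrt {d a b : ℝ} [Decidable (a = 0)] (hdb : 0 ≤ d * b) :
    d * b * (if a = 0 then 1 else 0) ≤ (√(d * a) - √(d * b)) ^ 2 := by
  split_ifs with ha
  · simp [ha, Real.sq_sqrt hdb]
  · simpa using sq_nonneg (√(d * a) - √(d * b))

open Classical in
/-- The loss of any policy against the support of the demonstrator is bounded by the
squared Hellinger distance between the joint laws. -/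
theorem stmt6 {X Y : Type*} [Countable X] [Countable Y]
    (D : X → ℝ) (hD : ∀ x, 0 ≤ D x) (hD1 : ∑' x, D x = 1)
    (πs πh : X → Y → ℝ)
    (hπs0 : ∀ x y, 0 ≤ πs x y) (hπs1 : ∀ x, ∑' y, πs x y = 1)
    (hπh0 : ∀ x y, 0 ≤ πh x y) (hπh1 : ∀ x, ∑' y, πh x y = 1) :
    ∑' x, ∑' y, D x * πh x y * (if πs x y = 0 then 1 else 0)
      ≤ ∑' p : X × Y,
          (Real.sqrt (D p.1 * πs p.1 p.2) - Real.sqrt (D p.1 * πh p.1 p.2)) ^ 2 := by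
  have hDs : Summable D := summable_of_tsum_ne_zero (by simp [hD1])
  have hjs := summable_mul_kernel hD hDs hπs0 hπs1
  have hjh := summable_mul_kernel hD hDs hπh0 hπh1
  have hmass : ∀ p : X × Y, 0 ≤ D p.1 * πh p.1 p.2 := fun p =>
    mul_nonneg (hD p.1) (hπh0 p.1 p.2)
  have hloss : Summable fun p : X × Y =>
      D p.1 * πh p.1 p.2 * (if πs p.1 p.2 = 0 then 1 else 0) :=
    hjh.of_nonneg_of_le (fun p => mul_nonneg (hmass p) (by split_ifs <;> norm_num))
      fun p => by split_ifs <;> simp [hmass p]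
  have hhell : Summable fun p : X × Y =>
      (Real.sqrt (D p.1 * πs p.1 p.2) - Real.sqrt (D p.1 * πh p.1 p.2)) ^ 2 :=
    (hjs.add hjh).of_nonneg_of_le (fun p => sq_nonneg _) fun p =>
      sq_sqrt_sub_sqrt_le_add (mul_nonneg (hD p.1) (hπs0 p.1 p.2)) (hmass p)
  rw [← hloss.tsum_prod' fun x => hloss.prod_factor x]
  exact hloss.tsum_le_tsum (fun p => mul_ite_zero_le_sq_sqrt_sub_sqrt (hmass p)) hhell
end

section
/- There exists a hypothesis class S = {σ₀, σ₀₁} over X = ℕ and Y = {0,1}, with σ₀(x) = {0} and σ₀₁(x) = {0,1} for all x, such that for every sample size m and every γ ∈ (0,1), taking D uniform on {1,…,⌈m/γ⌉}, σ* = σ₀, and π*(·|x) = δ₀: the predictor π̂ defined by π̂(·|x) = δ₀ if x appears in the sample and δ₁ otherwise is a maximum likelihood estimator over the class of all policies supported on some σ ∈ S, and deterministically satisfies L_{D,σ*}(π̂) ≥ 1 − γ. -/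
/-!
Since `σ₀₁ x = {0, 1}` is everything, membership in `Π_S` only asks for a probability vector, so
every policy has likelihood at most `1`, which `π̂` attains on the sample. Off the sample `π̂`
answers `1`, and the sample covers at most `m` of the `q = ⌈m / γ⌉` equally likely contexts, so
the loss is at least `(q - m) / q ≥ 1 - γ`.
-/

open Finset

theorem tsum_uniform_Icc_mul (q : ℕ) (f : ℕ → ℝ) :
    ∑' x, (if 1 ≤ x ∧ x ≤ q then 1 / (q : ℝ) else 0) * f x = (∑ x ∈ Icc 1 q, f x) / q := by
  rw [tsum_eq_sum (s := Icc 1 q), sum_div]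
  · refine sum_congr rfl fun x hx => ?_
    rw [if_pos (mem_Icc.mp hx), one_div_mul_eq_div]
  · intro x hx
    rw [if_neg (by simpa using hx), zero_mul]

theorem card_sub_le_card_filter_not_mem_range {m : ℕ} (xs : Fin m → ℕ) (t : Finset ℕ) :
    #t - m ≤ #(t.filter fun x => ¬∃ i, xs i = x) := by
  have hfilter : t.filter (fun x => ¬∃ i, xs i = x) = t \ univ.image xs := by
    ext x
    simp
  calc #t - m ≤ #t - #(univ.image xs) := by
        gcongr
        exact card_image_le.trans_eq (card_fin m)
    _ ≤ _ := hfilter ▸ le_card_sdiff _ _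

theorem one_sub_le_div_natCeil {m k : ℕ} {γ : ℝ} (hm : 0 < m) (hγ : 0 < γ)
    (hk : ⌈(m : ℝ) / γ⌉₊ - m ≤ k) : 1 - γ ≤ k / ⌈(m : ℝ) / γ⌉₊ := by
  set q := ⌈(m : ℝ) / γ⌉₊
  have hle_q : (m : ℝ) / γ ≤ q := Nat.le_ceil _
  have hq : (0 : ℝ) < q := lt_of_lt_of_le (by positivity) hle_q
  have hm_le : (m : ℝ) ≤ γ * q := by rwa [div_le_iff₀' hγ] at hle_q
  have hk' : (q : ℝ) ≤ k + m := by exact_mod_cast Nat.sub_le_iff_le_add.mp hk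
  rw [le_div_iff₀ hq]
  linarith

open Classical in
theorem stmt7_general (m : ℕ) (hm : 1 ≤ m) (γ : ℝ) (hγ0 : 0 < γ)
    (xs : Fin m → ℕ) :
    let q : ℕ := ⌈(m : ℝ) / γ⌉₊
    let D : ℕ → ℝ := fun x => if 1 ≤ x ∧ x ≤ q then 1 / (q : ℝ) else 0
    let σ0 : ℕ → Set (Fin 2) := fun _ => {0}
    let σ01 : ℕ → Set (Fin 2) := fun _ => {0, 1}
    let PiS : Set (ℕ → Fin 2 → ℝ) := {π | (∀ x y, 0 ≤ π x y) ∧ (∀ x, π x 0 + π x 1 = 1) ∧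
      ((∀ x y, π x y ≠ 0 → y ∈ σ0 x) ∨ (∀ x y, π x y ≠ 0 → y ∈ σ01 x))}
    let πhat : ℕ → Fin 2 → ℝ := fun x y =>
      if ∃ i, xs i = x then (if y = 0 then 1 else 0) else (if y = 1 then 1 else 0)
    (πhat ∈ PiS ∧ ∀ π ∈ PiS, ∏ i, π (xs i) 0 ≤ ∏ i, πhat (xs i) 0) ∧
      1 - γ ≤ ∑' x, D x * πhat x 1 := by
  intro q D σ0 σ01 PiS πhat
  have hπhat_mem : πhat ∈ PiS := by
    refine ⟨fun x y => ?_, fun x => ?_, Or.inr fun x y _ => ?_⟩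
    · simp only [πhat]
      split_ifs <;> norm_num
    · by_cases h : ∃ i, xs i = x <;> simp [πhat, h]
    · fin_cases y <;> simp [σ01]
  have hπhat_likelihood : ∏ i, πhat (xs i) 0 = 1 :=
    prod_eq_one fun i _ => by simp [πhat]
  have hπhat_loss : ∀ x, πhat x 1 = if ¬∃ i, xs i = x then 1 else 0 := fun x => by
    by_cases h : ∃ i, xs i = x <;> simp [πhat, h]
  refine ⟨⟨hπhat_mem, fun π ⟨hnonneg, hsum, _⟩ => ?_⟩, ?_⟩
  · rw [hπhat_likelihood]
    exact prod_le_one (fun i _ => hnonneg _ _)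
      fun i _ => by linarith [hsum (xs i), hnonneg (xs i) 1]
  · rw [tsum_uniform_Icc_mul, sum_congr rfl fun x _ => hπhat_loss x, sum_boole]
    have hunseen := card_sub_le_card_filter_not_mem_range xs (Icc 1 q)
    rw [Nat.card_Icc, Nat.add_sub_cancel] at hunseen
    exact one_sub_le_div_natCeil hm hγ0 hunseen

open Classical in
/-- Failure of MLE over Π_S: the memorize-then-output-1 predictor is an MLE over the class
of policies supported on some σ ∈ S = {σ₀, σ₀₁}, yet its loss is at least 1 − γ. -/
theorem stmt7 (m : ℕ) (hm : 1 ≤ m) (γ : ℝ) (hγ0 : 0 < γ) (hγ1 : γ < 1)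
    (xs : Fin m → ℕ) :
    let q : ℕ := ⌈(m : ℝ) / γ⌉₊
    let D : ℕ → ℝ := fun x => if 1 ≤ x ∧ x ≤ q then 1 / (q : ℝ) else 0
    let σ0 : ℕ → Set (Fin 2) := fun _ => {0}
    let σ01 : ℕ → Set (Fin 2) := fun _ => {0, 1}
    let PiS : Set (ℕ → Fin 2 → ℝ) := {π | (∀ x y, 0 ≤ π x y) ∧ (∀ x, π x 0 + π x 1 = 1) ∧
      ((∀ x y, π x y ≠ 0 → y ∈ σ0 x) ∨ (∀ x y, π x y ≠ 0 → y ∈ σ01 x))}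
    let πhat : ℕ → Fin 2 → ℝ := fun x y =>
      if ∃ i, xs i = x then (if y = 0 then 1 else 0) else (if y = 1 then 1 else 0)
    (πhat ∈ PiS ∧ ∀ π ∈ PiS, ∏ i, π (xs i) 0 ≤ ∏ i, πhat (xs i) 0) ∧
      1 - γ ≤ ∑' x, D x * πhat x 1 :=
  stmt7_general m hm γ hγ0 xs
end

section
/- For every γ ∈ (0,1), there exists a class S = {σ₁, σ₂} over a single context x with |Y| = 2⌈1/γ⌉, where σ₁(x) has size s = ⌈1/γ⌉, σ₂(x) has size s+1, and σ₁(x) ∩ σ₂(x) = {y*}, such that with ground truth σ* = σ₂ and demonstrator π* = δ_{y*}: the uniform policy π_{unif,σ₁} (uniform over σ₁(x)) is the unique maximizer of the likelihood over {π_{unif,σ₁}, π_{unif,σ₂}} for any sample of size m (since (1/s)^m > (1/(s+1))^m), and its loss satisfies L_{D,σ*}(π_{unif,σ₁}) = 1 − 1/s ≥ 1 − γ. -/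
/-! Split `Fin (2 s)` at the pivot `p = s - 1` into `A = Iic p` (size `s`) and `B = Ici p`
(size `s + 1`), which meet only in `p`. The smaller support gives each observation of `p` the
larger probability `1 / s`, so the uniform policy on `A` wins the likelihood comparison, yet it
places mass `(s - 1) / s = 1 - 1 / s ≥ 1 - γ` outside the true support `B`. -/

namespace Finset

variable {α : Type*} [LinearOrder α] [LocallyFiniteOrderBot α] [LocallyFiniteOrderTop α]

theorem Iic_inter_Ici_self (p : α) : Iic p ∩ Ici p = {p} := by
  ext y
  simp [le_antisymm_iff, and_comm]

theorem filter_Iic_notMem_Ici (p : α) :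
    (Iic p).filter (· ∉ Ici p) = Iio p := by
  ext y
  simp only [mem_filter, mem_Iic, mem_Ici, not_le, mem_Iio]
  exact ⟨And.right, fun h => ⟨h.le, h⟩⟩

end Finset

theorem one_sub_le_pred_ceil_one_div_div_ceil {γ : ℝ} (hγ : 0 < γ) :
    1 - γ ≤ ((⌈1 / γ⌉₊ - 1 : ℕ) : ℝ) / ⌈1 / γ⌉₊ := by
  have hs : 1 ≤ ⌈1 / γ⌉₊ := Nat.one_le_ceil_iff.mpr (by positivity)
  have hs_pos : (0 : ℝ) < ⌈1 / γ⌉₊ := by exact_mod_cast hs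
  have hinv : 1 / (⌈1 / γ⌉₊ : ℝ) ≤ γ := by
    rw [div_le_iff₀ hs_pos, ← div_le_iff₀' hγ]
    exact Nat.le_ceil _
  rw [Nat.cast_pred hs, sub_div, div_self hs_pos.ne']
  linarith

theorem stmt8_general (γ : ℝ) (hγ0 : 0 < γ) :
    ∃ (A B : Finset (Fin (2 * ⌈1 / γ⌉₊))) (ystar : Fin (2 * ⌈1 / γ⌉₊)),
      A.card = ⌈1 / γ⌉₊ ∧ B.card = ⌈1 / γ⌉₊ + 1 ∧ A ∩ B = {ystar} ∧
      (∀ m : ℕ, 1 ≤ m → (1 / (B.card : ℝ)) ^ m < (1 / (A.card : ℝ)) ^ m) ∧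
      1 - γ ≤ ((A.filter (fun y => y ∉ B)).card : ℝ) / (A.card : ℝ) := by
  set s := ⌈1 / γ⌉₊
  have hs : 1 ≤ s := Nat.one_le_ceil_iff.mpr (by positivity)
  let p : Fin (2 * s) := ⟨s - 1, by omega⟩
  have hA : (Finset.Iic p).card = s := by rw [Fin.card_Iic, Fin.val_mk]; omega
  have hB : (Finset.Ici p).card = s + 1 := by rw [Fin.card_Ici, Fin.val_mk]; omega
  refine ⟨Finset.Iic p, Finset.Ici p, p, hA, hB, Finset.Iic_inter_Ici_self p, ?_, ?_⟩
  · intro m hm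
    rw [hA, hB]
    exact pow_lt_pow_left₀ (one_div_lt_one_div_of_lt (by positivity) (by simp)) (by positivity)
      (by omega)
  · rw [Finset.filter_Iic_notMem_Ici, Fin.card_Iio, hA]
    exact one_sub_le_pred_ceil_one_div_div_ceil hγ0

/-- Failure of MLE over the uniform policies: the uniform policy on the smaller support
is the unique likelihood maximizer, yet its loss against the ground truth is ≥ 1 − γ. -/
theorem stmt8 (γ : ℝ) (hγ0 : 0 < γ) (hγ1 : γ < 1) :
    ∃ (A B : Finset (Fin (2 * ⌈1 / γ⌉₊))) (ystar : Fin (2 * ⌈1 / γ⌉₊)),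
      A.card = ⌈1 / γ⌉₊ ∧ B.card = ⌈1 / γ⌉₊ + 1 ∧ A ∩ B = {ystar} ∧
      (∀ m : ℕ, 1 ≤ m → (1 / (B.card : ℝ)) ^ m < (1 / (A.card : ℝ)) ^ m) ∧
      1 - γ ≤ ((A.filter (fun y => y ∉ B)).card : ℝ) / (A.card : ℝ) :=
  stmt8_general γ hγ0
end

section
/- Let ℓ_1,…,ℓ_m be {0,1}-valued random variables adapted to a filtration, with Σ_t ℓ_t ≤ B almost surely for a constant B, and let p_t := E[ℓ_t | F_{t−1}]. Then E[(1/m) Σ_t p_t] ≤ B/m, and with probability at least 1−δ, (1/m) Σ_{t=1}^m p_t ≤ (1 + 2B + 12 log(2 log m / δ))/m. -/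
/-!
Put `c = 1 - e⁻¹`. A `{0,1}`-valued `ℓ` satisfies `e^{-ℓ} = 1 - c ℓ`, so
`E[e^{c p_t - ℓ_t} | ℱ_t] = e^{c p_t} (1 - c p_t) ≤ 1` and `exp (∑_{t<n} (c p_t - ℓ_t))` is a
supermartingale started at `1`. By Markov's inequality, with probability at least `1 - δ`,
`c ∑ p_t < ∑ ℓ_t + log δ⁻¹ ≤ B + log δ⁻¹`, and `c ≥ 1/2` gives `∑ p_t ≤ 2 B + 2 log δ⁻¹`.
The bound in expectation is the tower property `E[∑ p_t] = E[∑ ℓ_t] ≤ B`.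
-/

open MeasureTheory ProbabilityTheory Filter Finset Real

theorem Real.exp_mul_one_sub_le_one (x : ℝ) : exp x * (1 - x) ≤ 1 :=
  calc exp x * (1 - x) ≤ exp x * exp (-x) := by gcongr; exact one_sub_le_exp_neg x
    _ = 1 := by rw [← exp_add, add_neg_cancel, exp_zero]

theorem Real.exp_neg_eq_one_sub_mul_of_eq_zero_or_eq_one {x : ℝ} (hx : x = 0 ∨ x = 1) :
    exp (-x) = 1 - (1 - exp (-1)) * x := by
  rcases hx with rfl | rfl <;> simp

theorem Real.one_sub_exp_neg_one_mem_Icc : 1 - exp (-1) ∈ Set.Icc (1 / 2) 1 := by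
  have : exp (-1) ≤ 1 / 2 := by
    rw [exp_neg, ← one_div]
    gcongr
    linarith [add_one_le_exp 1]
  constructor <;> linarith [exp_pos (-1)]

theorem Real.log_inv_le_log_two_mul_log_div {δ : ℝ} (hδ : 0 < δ) {m : ℕ} (hm : 2 ≤ m) :
    log δ⁻¹ ≤ log (2 * log m / δ) := by
  have h2 : (2 : ℝ) ≤ m := by exact_mod_cast hm
  have : (1 : ℝ) ≤ 2 * log m := by
    linarith [log_two_gt_d9, log_le_log two_pos h2]
  rw [inv_eq_one_div]
  gcongr

theorem le_one_add_two_mul_add_twelve_mul_log {B δ x : ℝ} {m : ℕ} (hB : 0 ≤ B) (hδ : 0 < δ)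
    (hδ1 : δ < 1) (hxm : x ≤ m) (hx : x ≤ 2 * (B + log δ⁻¹)) :
    x ≤ 1 + 2 * B + 12 * log (2 * log m / δ) := by
  rcases le_or_gt m 1 with hm | hm
  -- here `2 * log m / δ = 0` and `log 0 = 0`
  · have hlog : log (2 * log m / δ) = 0 := by
      interval_cases m <;> simp
    have : (m : ℝ) ≤ 1 := by exact_mod_cast hm
    linarith
  · have h0 : 0 ≤ log δ⁻¹ := log_nonneg (one_le_inv₀ hδ |>.2 hδ1.le)
    linarith [log_inv_le_log_two_mul_log_div hδ hm]

section

variable {Ω : Type*} {m0 : MeasurableSpace Ω} {μ : Measure Ω}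

theorem ae_mem_Icc_condExp {m : MeasurableSpace Ω} {f : Ω → ℝ}
    (hf : ∀ᵐ ω ∂μ, f ω ∈ Set.Icc 0 1) : ∀ᵐ ω ∂μ, μ[f|m] ω ∈ Set.Icc 0 1 := by
  have habs : ∀ᵐ ω ∂μ, |f ω| ≤ 1 := by
    filter_upwards [hf] with ω hω
    exact abs_le.2 ⟨by linarith [hω.1], hω.2⟩
  filter_upwards [condExp_nonneg (m := m) (hf.mono fun ω h => h.1),
    ae_bdd_abs_condExp_of_ae_bdd_abs (m := m) habs] with ω h0 h1
  exact ⟨h0, (le_abs_self _).trans h1⟩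

theorem ae_mem_Icc_of_ae_eq_zero_or_eq_one {f : Ω → ℝ} (h : ∀ᵐ ω ∂μ, f ω = 0 ∨ f ω = 1) :
    ∀ᵐ ω ∂μ, f ω ∈ Set.Icc 0 1 :=
  h.mono fun ω hω => by rcases hω with hω | hω <;> simp [hω]

theorem integrable_of_ae_mem_Icc [IsFiniteMeasure μ] {f : Ω → ℝ} (hf : AEStronglyMeasurable f μ)
    {a b : ℝ} (h : ∀ᵐ ω ∂μ, f ω ∈ Set.Icc a b) : Integrable f μ :=
  .of_bound hf (max |a| |b|) <| h.mono fun ω hω => by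
    rw [Real.norm_eq_abs]; exact abs_le_max_abs_abs hω.1 hω.2

theorem integral_sum_condExp_le [IsProbabilityMeasure μ] {ι : Type*} [Preorder ι]
    {ℱ : Filtration ι m0} {ℓ : ι → Ω → ℝ} (hint : ∀ t, Integrable (ℓ t) μ) {s : Finset ι} {B : ℝ}
    (hbound : ∀ᵐ ω ∂μ, ∑ t ∈ s, ℓ t ω ≤ B) : ∫ ω, ∑ t ∈ s, μ[ℓ t|ℱ t] ω ∂μ ≤ B := by
  rw [integral_finsetSum _ fun t _ => integrable_condExp]
  simp_rw [integral_condExp (ℱ.le _)]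
  rw [← integral_finsetSum _ fun t _ => hint t]
  calc ∫ ω, ∑ t ∈ s, ℓ t ω ∂μ ≤ ∫ _, B ∂μ :=
        integral_mono_ae (integrable_finsetSum _ fun t _ => hint t) (integrable_const B) hbound
    _ = B := by simp

theorem condExp_exp_neg_ae_eq [IsFiniteMeasure μ] {m : MeasurableSpace Ω} (hm : m ≤ m0)
    {f : Ω → ℝ} (hf : Integrable f μ) (h01 : ∀ᵐ ω ∂μ, f ω = 0 ∨ f ω = 1) :
    μ[fun ω => exp (-f ω)|m] =ᵐ[μ] fun ω => 1 - (1 - exp (-1)) * μ[f|m] ω := by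
  have hlin : (fun ω => exp (-f ω)) =ᵐ[μ] (fun _ => (1 : ℝ)) - (1 - exp (-1)) • f := by
    filter_upwards [h01] with ω hω
    simp [exp_neg_eq_one_sub_mul_of_eq_zero_or_eq_one hω]
  filter_upwards [condExp_congr_ae (m := m) hlin,
    condExp_sub (m := m) (integrable_const 1) (hf.smul (1 - exp (-1))),
    condExp_smul (m := m) (1 - exp (-1)) f] with ω h1 h2 h3
  simp [h1, h2, h3, condExp_const hm]

theorem ofReal_one_sub_le_measure_lt_log_inv [IsProbabilityMeasure μ] {S : Ω → ℝ}
    (hint : Integrable (fun ω => exp (S ω)) μ) (hle : ∫ ω, exp (S ω) ∂μ ≤ 1) {δ : ℝ}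
    (hδ : 0 < δ) : ENNReal.ofReal (1 - δ) ≤ μ {ω | S ω < log δ⁻¹} := by
  have htail : μ {ω | log δ⁻¹ ≤ S ω} ≤ ENNReal.ofReal δ := by
    have := measure_ge_le_exp_mul_mgf (μ := μ) (X := S) (log δ⁻¹) zero_le_one
      (by simpa only [one_mul] using hint)
    simp only [mgf, one_mul, neg_one_mul, exp_neg, exp_log (inv_pos.2 hδ), inv_inv] at this
    rw [ENNReal.le_ofReal_iff_toReal_le (measure_ne_top _ _) hδ.le]
    exact this.trans (mul_le_of_le_one_right hδ.le hle)
  have hcover : 1 ≤ μ {ω | S ω < log δ⁻¹} + μ {ω | log δ⁻¹ ≤ S ω} :=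
    calc 1 = μ Set.univ := measure_univ.symm
      _ ≤ μ ({ω | S ω < log δ⁻¹} ∪ {ω | log δ⁻¹ ≤ S ω}) :=
        measure_mono fun ω _ => lt_or_ge (S ω) (log δ⁻¹)
      _ ≤ _ := measure_union_le _ _
  calc ENNReal.ofReal (1 - δ) = 1 - ENNReal.ofReal δ := by
        rw [ENNReal.ofReal_sub _ hδ.le, ENNReal.ofReal_one]
    _ ≤ 1 - μ {ω | log δ⁻¹ ≤ S ω} := tsub_le_tsub_left htail 1
    _ ≤ μ {ω | S ω < log δ⁻¹} := tsub_le_iff_right.2 hcover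

variable [IsFiniteMeasure μ] {ℱ : Filtration ℕ m0} {ℓ : ℕ → Ω → ℝ}

theorem supermartingale_exp_sum_sub (hadapt : ∀ t, StronglyMeasurable[ℱ (t + 1)] (ℓ t))
    (hval : ∀ t, ∀ᵐ ω ∂μ, ℓ t ω = 0 ∨ ℓ t ω = 1) :
    Supermartingale
      (fun n ω => exp (∑ t ∈ range n, ((1 - exp (-1)) * μ[ℓ t|ℱ t] ω - ℓ t ω))) ℱ μ := by
  set c := 1 - exp (-1)
  set f := fun n ω => exp (∑ t ∈ range n, (c * μ[ℓ t|ℱ t] ω - ℓ t ω)) with hf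
  have hc := one_sub_exp_neg_one_mem_Icc
  have hℓ01 : ∀ t, ∀ᵐ ω ∂μ, ℓ t ω ∈ Set.Icc 0 1 := fun t =>
    ae_mem_Icc_of_ae_eq_zero_or_eq_one (hval t)
  have hℓint : ∀ t, Integrable (ℓ t) μ := fun t =>
    integrable_of_ae_mem_Icc ((hadapt t).mono (ℱ.le _)).aestronglyMeasurable (hℓ01 t)
  have hstep_le : ∀ᵐ ω ∂μ, ∀ t, c * μ[ℓ t|ℱ t] ω - ℓ t ω ≤ 1 := by
    rw [ae_all_iff]; intro t
    filter_upwards [hℓ01 t, ae_mem_Icc_condExp (m := ℱ t) (hℓ01 t)] with ω hℓ hp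
    nlinarith [hℓ.1, hp.1, hp.2, hc.1, hc.2]
  have hadp : StronglyAdapted ℱ f := fun n =>
    continuous_exp.comp_stronglyMeasurable <| Finset.stronglyMeasurable_fun_sum _ fun t ht =>
      ((stronglyMeasurable_condExp.mono (ℱ.mono (mem_range.1 ht).le)).const_mul c).sub
        ((hadapt t).mono (ℱ.mono (mem_range.1 ht)))
  have hint : ∀ n, Integrable (f n) μ := fun n =>
    .of_bound ((hadp n).mono (ℱ.le n)).aestronglyMeasurable (exp n) <|
      hstep_le.mono fun ω h => by
        rw [Real.norm_eq_abs, abs_of_pos (exp_pos _)]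
        gcongr
        simpa using sum_le_sum fun t (_ : t ∈ range n) => h t
  refine supermartingale_nat hadp hint fun n => ?_
  have hsplit :
      f (n + 1) = (fun ω => f n ω * exp (c * μ[ℓ n|ℱ n] ω)) * fun ω => exp (-ℓ n ω) := by
    ext ω; simp only [hf, sum_range_succ, Pi.mul_apply, ← exp_add]; ring_nf
  have hg : StronglyMeasurable[ℱ n] fun ω => f n ω * exp (c * μ[ℓ n|ℱ n] ω) :=
    (hadp n).mul (continuous_exp.comp_stronglyMeasurable (stronglyMeasurable_condExp.const_mul c))
  have hexp_int : Integrable (fun ω => exp (-ℓ n ω)) μ :=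
    integrable_of_ae_mem_Icc
      (continuous_exp.comp_stronglyMeasurable ((hadapt n).mono (ℱ.le _)).neg).aestronglyMeasurable
      ((hℓ01 n).mono fun ω h => ⟨(exp_pos _).le, exp_le_one_iff.2 (by linarith [h.1])⟩)
  filter_upwards [condExp_mul_of_stronglyMeasurable_left hg (hsplit ▸ hint (n + 1)) hexp_int,
    condExp_exp_neg_ae_eq (ℱ.le n) (hℓint n) (hval n)] with ω h1 h2
  rw [hsplit, h1, Pi.mul_apply, h2, mul_assoc]
  exact mul_le_of_le_one_right (exp_pos _).le (exp_mul_one_sub_le_one _)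

end

open MeasureTheory in
theorem stmt10_general {Ω : Type*} [m0 : MeasurableSpace Ω] {μ : Measure Ω} [IsProbabilityMeasure μ]
    (ℱ : Filtration ℕ m0) (ℓ : ℕ → Ω → ℝ)
    (hadapt : ∀ t, StronglyMeasurable[ℱ (t + 1)] (ℓ t))
    (hval : ∀ t, ∀ᵐ ω ∂μ, ℓ t ω = 0 ∨ ℓ t ω = 1)
    (B : ℝ) (hB : 0 ≤ B) (m : ℕ)
    (hbound : ∀ᵐ ω ∂μ, ∑ t ∈ Finset.range m, ℓ t ω ≤ B)
    (p : ℕ → Ω → ℝ) (hp : ∀ t, p t = μ[ℓ t|ℱ t])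
    (δ : ℝ) (hδ : 0 < δ) (hδ1 : δ < 1) :
    (∫ ω, (1 / (m : ℝ)) * ∑ t ∈ Finset.range m, p t ω ∂μ ≤ B / m) ∧
    (μ {ω | (1 / (m : ℝ)) * ∑ t ∈ Finset.range m, p t ω
        ≤ (1 + 2 * B + 12 * Real.log (2 * Real.log m / δ)) / m}
      ≥ ENNReal.ofReal (1 - δ)) := by
  obtain rfl : p = fun t => μ[ℓ t|ℱ t] := funext hp
  have hℓ01 : ∀ t, ∀ᵐ ω ∂μ, ℓ t ω ∈ Set.Icc 0 1 := fun t =>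
    ae_mem_Icc_of_ae_eq_zero_or_eq_one (hval t)
  refine ⟨?_, ?_⟩
  · rw [integral_const_mul, one_div_mul_eq_div]
    refine div_le_div_of_nonneg_right (integral_sum_condExp_le (fun t => ?_) hbound) m.cast_nonneg
    exact integrable_of_ae_mem_Icc ((hadapt t).mono (ℱ.le _)).aestronglyMeasurable (hℓ01 t)
  have hsup := supermartingale_exp_sum_sub hadapt hval
  have hgood := ofReal_one_sub_le_measure_lt_log_inv (hsup.integrable m)
    (by simpa using hsup.setIntegral_le (Nat.zero_le m) MeasurableSet.univ) hδ
  refine hgood.trans (measure_mono_ae ?_)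
  filter_upwards [hbound, ae_all_iff.2 fun t => ae_mem_Icc_condExp (m := ℱ t) (hℓ01 t)]
    with ω hsumℓ hp01 hS
  change _ < _ at hS
  rw [sum_sub_distrib, ← mul_sum] at hS
  change _ ≤ _
  rw [one_div_mul_eq_div]
  gcongr
  refine le_one_add_two_mul_add_twelve_mul_log hB hδ hδ1 ?_ ?_
  · simpa using sum_le_sum fun t (_ : t ∈ range m) => (hp01 t).2
  · have := sum_nonneg fun t (_ : t ∈ range m) => (hp01 t).1
    nlinarith [one_sub_exp_neg_one_mem_Icc.1]

open MeasureTheory in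
/-- Online-to-batch conversion: in-expectation and high-probability (Freedman) bounds on the
average conditional means of {0,1}-valued adapted losses whose sum is a.s. bounded by B. -/
theorem stmt10 {Ω : Type*} [m0 : MeasurableSpace Ω] {μ : Measure Ω} [IsProbabilityMeasure μ]
    (ℱ : Filtration ℕ m0) (ℓ : ℕ → Ω → ℝ)
    (hadapt : ∀ t, StronglyMeasurable[ℱ (t + 1)] (ℓ t))
    (hval : ∀ t, ∀ᵐ ω ∂μ, ℓ t ω = 0 ∨ ℓ t ω = 1)
    (B : ℝ) (hB : 0 ≤ B) (m : ℕ) (hm : 1 ≤ m)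
    (hbound : ∀ᵐ ω ∂μ, ∑ t ∈ Finset.range m, ℓ t ω ≤ B)
    (p : ℕ → Ω → ℝ) (hp : ∀ t, p t = μ[ℓ t|ℱ t])
    (δ : ℝ) (hδ : 0 < δ) (hδ1 : δ < 1) :
    (∫ ω, (1 / (m : ℝ)) * ∑ t ∈ Finset.range m, p t ω ∂μ ≤ B / m) ∧
    (μ {ω | (1 / (m : ℝ)) * ∑ t ∈ Finset.range m, p t ω
        ≤ (1 + 2 * B + 12 * Real.log (2 * Real.log m / δ)) / m}
      ≥ ENNReal.ofReal (1 - δ)) :=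
  stmt10_general (m0 := m0) ℱ ℓ hadapt hval B hB m hbound p hp δ hδ hδ1
end

section
/- Let weights be updated by w^{t+1}(σ) = w^t(σ) · α^{1[ŷ_t ∉ σ(x_t)]} · β^{1[y_t ∉ σ(x_t)]}, with w^1 ≡ 1, α > 1, 0 < β < 1, α ≤ 2 − β, αβ ≤ 1, and ŷ_t chosen to maximize total weight of hypotheses containing it. Then for any σ ∈ S and any horizon T, the number M_T^alg(σ) = Σ_{t≤T} 1[ŷ_t ∉ σ(x_t)] of rounds where the algorithm's output is outside σ satisfies M_T^alg(σ) ≤ log|S|/log α + M_T(σ) · log(1/β)/log α, where M_T(σ) = Σ_{t≤T} 1[y_t ∉ σ(x_t)]. -/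
/-- Regret bound for the soft (α, β) mistake-unaware weight update:
M_T^alg(σ) ≤ log|S|/log α + M_T(σ)·log(1/β)/log α. -/
theorem stmt12 {H X Y : Type*} [Fintype H] [Nonempty H] [DecidableEq Y]
    (σ : H → X → Finset Y) (x : ℕ → X) (y : ℕ → Y) (yhat : ℕ → Y)
    (α β : ℝ) (hα : 1 < α) (hβ0 : 0 < β) (hβ1 : β < 1)
    (hαβ2 : α ≤ 2 - β) (hαβ : α * β ≤ 1)
    (w : ℕ → H → ℝ) (hw1 : ∀ h, w 0 h = 1)
    (hmax : ∀ t (z : Y), ∑ h ∈ Finset.univ.filter (fun h => z ∈ σ h (x t)), w t h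
      ≤ ∑ h ∈ Finset.univ.filter (fun h => yhat t ∈ σ h (x t)), w t h)
    (hupd : ∀ t h, w (t + 1) h = w t h * (if yhat t ∉ σ h (x t) then α else 1)
        * (if y t ∉ σ h (x t) then β else 1))
    (h : H) (T : ℕ) :
    (((Finset.range T).filter (fun t => yhat t ∉ σ h (x t))).card : ℝ)
      ≤ Real.log (Fintype.card H) / Real.log α
        + (((Finset.range T).filter (fun t => y t ∉ σ h (x t))).card : ℝ)
          * Real.log (1 / β) / Real.log α := by
  have hα0 : (0:ℝ) < α := lt_trans zero_lt_one hα
  -- positivity of weights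
  have hpos : ∀ t g, 0 < w t g := by
    intro t
    induction t with
    | zero => intro g; rw [hw1]; norm_num
    | succ n ih =>
      intro g
      rw [hupd]
      have := ih g
      positivity
  -- total weight nonincreasing
  have hstep : ∀ t, ∑ g, w (t + 1) g ≤ ∑ g, w t g := by
    intro t
    have hsplit : ∀ (v : H → ℝ), ∑ g, v g
        = (∑ g ∈ Finset.univ.filter (fun g => yhat t ∈ σ g (x t) ∧ y t ∈ σ g (x t)), v g)
        + (∑ g ∈ Finset.univ.filter (fun g => yhat t ∈ σ g (x t) ∧ y t ∉ σ g (x t)), v g)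
        + (∑ g ∈ Finset.univ.filter (fun g => yhat t ∉ σ g (x t) ∧ y t ∈ σ g (x t)), v g)
        + (∑ g ∈ Finset.univ.filter (fun g => yhat t ∉ σ g (x t) ∧ y t ∉ σ g (x t)), v g) := by
      intro v
      rw [← Finset.sum_filter_add_sum_filter_not Finset.univ (fun g => yhat t ∈ σ g (x t)) v,
        ← Finset.sum_filter_add_sum_filter_not (Finset.univ.filter (fun g => yhat t ∈ σ g (x t)))
          (fun g => y t ∈ σ g (x t)) v,
        ← Finset.sum_filter_add_sum_filter_not (Finset.univ.filter (fun g => ¬ (yhat t ∈ σ g (x t))))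
          (fun g => y t ∈ σ g (x t)) v]
      simp only [Finset.filter_filter]
      ring
    set a := ∑ g ∈ Finset.univ.filter (fun g => yhat t ∈ σ g (x t) ∧ y t ∈ σ g (x t)), w t g with ha
    set b := ∑ g ∈ Finset.univ.filter (fun g => yhat t ∈ σ g (x t) ∧ y t ∉ σ g (x t)), w t g with hb
    set c := ∑ g ∈ Finset.univ.filter (fun g => yhat t ∉ σ g (x t) ∧ y t ∈ σ g (x t)), w t g with hc
    set d := ∑ g ∈ Finset.univ.filter (fun g => yhat t ∉ σ g (x t) ∧ y t ∉ σ g (x t)), w t g with hd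
    have hbpos : 0 ≤ b := Finset.sum_nonneg fun g _ => le_of_lt (hpos t g)
    have hdpos : 0 ≤ d := Finset.sum_nonneg fun g _ => le_of_lt (hpos t g)
    have hcb : c ≤ b := by
      have hm := hmax t (y t)
      have h1 : ∑ g ∈ Finset.univ.filter (fun g => y t ∈ σ g (x t)), w t g = a + c := by
        rw [← Finset.sum_filter_add_sum_filter_not
          (Finset.univ.filter (fun g => y t ∈ σ g (x t))) (fun g => yhat t ∈ σ g (x t)) (w t)]
        simp only [Finset.filter_filter, ha, hc]
        congr 1
        · apply Finset.sum_congr _ (fun _ _ => rfl)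
          apply Finset.filter_congr; tauto
        · apply Finset.sum_congr _ (fun _ _ => rfl)
          apply Finset.filter_congr; tauto
      have h2 : ∑ g ∈ Finset.univ.filter (fun g => yhat t ∈ σ g (x t)), w t g = a + b := by
        rw [← Finset.sum_filter_add_sum_filter_not
          (Finset.univ.filter (fun g => yhat t ∈ σ g (x t))) (fun g => y t ∈ σ g (x t)) (w t)]
        simp only [Finset.filter_filter, ha, hb]
      rw [h1, h2] at hm
      linarith
    have hnew : ∑ g, w (t + 1) g = a + β * b + α * c + (α * β) * d := by
      rw [hsplit (w (t + 1))]
      have e1 : ∑ g ∈ Finset.univ.filter (fun g => yhat t ∈ σ g (x t) ∧ y t ∈ σ g (x t)),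
          w (t + 1) g = a := by
        rw [ha]
        apply Finset.sum_congr rfl
        intro g hg
        simp only [Finset.mem_filter] at hg
        rw [hupd]
        simp [hg.2.1, hg.2.2]
      have e2 : ∑ g ∈ Finset.univ.filter (fun g => yhat t ∈ σ g (x t) ∧ y t ∉ σ g (x t)),
          w (t + 1) g = β * b := by
        rw [hb, Finset.mul_sum]
        apply Finset.sum_congr rfl
        intro g hg
        simp only [Finset.mem_filter] at hg
        rw [hupd]
        simp [hg.2.1, hg.2.2]
        ring
      have e3 : ∑ g ∈ Finset.univ.filter (fun g => yhat t ∉ σ g (x t) ∧ y t ∈ σ g (x t)),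
          w (t + 1) g = α * c := by
        rw [hc, Finset.mul_sum]
        apply Finset.sum_congr rfl
        intro g hg
        simp only [Finset.mem_filter] at hg
        rw [hupd]
        simp [hg.2.1, hg.2.2]
        ring
      have e4 : ∑ g ∈ Finset.univ.filter (fun g => yhat t ∉ σ g (x t) ∧ y t ∉ σ g (x t)),
          w (t + 1) g = (α * β) * d := by
        rw [hd, Finset.mul_sum]
        apply Finset.sum_congr rfl
        intro g hg
        simp only [Finset.mem_filter] at hg
        rw [hupd]
        simp [hg.2.1, hg.2.2]
        ring
      rw [e1, e2, e3, e4]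
    rw [hnew, hsplit (w t), ← ha, ← hb, ← hc, ← hd]
    nlinarith [mul_nonneg (sub_nonneg.2 hα.le) (sub_nonneg.2 hcb)]
  have hWle : ∀ t, ∑ g, w t g ≤ (Fintype.card H : ℝ) := by
    intro t
    induction t with
    | zero => simp [hw1]
    | succ n ih => exact le_trans (hstep n) ih
  -- value formula
  have hval : ∀ t, w t h = α ^ ((Finset.range t).filter (fun s => yhat s ∉ σ h (x s))).card
      * β ^ ((Finset.range t).filter (fun s => y s ∉ σ h (x s))).card := by
    intro t
    induction t with
    | zero => simp [hw1]
    | succ n ih =>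
      rw [hupd, ih, Finset.range_add_one, Finset.filter_insert, Finset.filter_insert]
      by_cases h1 : yhat n ∉ σ h (x n) <;> by_cases h2 : y n ∉ σ h (x n) <;>
        simp [h1, h2, Finset.card_insert_of_notMem, pow_succ] <;> ring
  -- combine
  set Ma := ((Finset.range T).filter (fun s => yhat s ∉ σ h (x s))).card with hMa
  set M := ((Finset.range T).filter (fun s => y s ∉ σ h (x s))).card with hM
  have hwT : α ^ Ma * β ^ M ≤ (Fintype.card H : ℝ) := by
    have h1 : w T h ≤ ∑ g, w T g :=
      Finset.single_le_sum (fun g _ => le_of_lt (hpos T g)) (Finset.mem_univ h)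
    rw [hval T] at h1
    exact le_trans h1 (hWle T)
  have hlog : (Ma : ℝ) * Real.log α + (M : ℝ) * Real.log β ≤ Real.log (Fintype.card H) := by
    have hl := Real.log_le_log (by positivity) hwT
    rwa [Real.log_mul (by positivity) (by positivity), Real.log_pow, Real.log_pow] at hl
  have hlα : 0 < Real.log α := Real.log_pos hα
  rw [← add_div, le_div_iff₀ hlα]
  have : Real.log (1 / β) = - Real.log β := by rw [one_div, Real.log_inv]
  rw [this]
  nlinarith
end

section
/- In the greedy top-k selection over weighted set slices: let A_y = {σ ∈ S : y ∈ σ(x)} with nonnegative weight function w, and select ŷ^{(1)},…,ŷ^{(k)} greedily so that ŷ^{(i)} maximizes w(A_y \ ⋃_{j<i} A_{ŷ^{(j)}}) over y not yet chosen. Let U = ⋃_{i=1}^k A_{ŷ^{(i)}}. Then for any label y, w(U \ A_y) ≥ k · w(A_y \ U). -/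
/-!
Add the chosen slices one at a time. When `B` is added to the covered part `P`, the mass of `T`
still uncovered drops from `w (T \ P)` to `w (T \ (P ∪ B))`, and `B \ P` contributes
`w ((B \ P) \ T)` new mass outside `T`; since the two differ by the common part
`w ((B \ P) ∩ T)`, greediness `w (T \ P) ≤ w (B \ P)` makes the new mass outside `T` at least
the mass of `T` left uncovered after the step, hence at least the mass left uncovered at the end.
Summing over the `k` steps gives the claim.
-/

open Finset

section GreedyCover

variable {ι H M : Type*} [DecidableEq H] [AddCommMonoid M]

theorem sum_union_sdiff (w : H → M) (Q B T : Finset H) :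
    ∑ x ∈ (B ∪ Q) \ T, w x = ∑ x ∈ Q \ T, w x + ∑ x ∈ (B \ Q) \ T, w x := by
  rw [add_comm, ← sum_union]
  · congr 1; ext x; simp only [mem_union, mem_sdiff]; tauto
  · exact disjoint_left.2 fun x hx hx' => (mem_sdiff.1 (mem_sdiff.1 hx).1).2 (mem_sdiff.1 hx').1

variable [PartialOrder M] [IsOrderedCancelAddMonoid M]

theorem sum_sdiff_union_le_of_sum_sdiff_le (w : H → M) {T P B : Finset H}
    (hgreedy : ∑ x ∈ T \ P, w x ≤ ∑ x ∈ B \ P, w x) :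
    ∑ x ∈ T \ (P ∪ B), w x ≤ ∑ x ∈ (B \ P) \ T, w x := by
  have hcommon : (T \ P) ∩ B = (B \ P) ∩ T := by
    ext x; simp only [mem_inter, mem_sdiff]; tauto
  rw [← sum_inter_add_sum_sdiff (T \ P) B, ← sum_inter_add_sum_sdiff (B \ P) T, hcommon,
    sdiff_sdiff_left, add_comm, add_comm (∑ x ∈ (B \ P) ∩ T, w x)] at hgreedy
  exact le_of_add_le_add_right hgreedy

theorem card_nsmul_sum_sdiff_biUnion_le [LinearOrder ι] (w : H → M) (hw : ∀ x, 0 ≤ w x)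
    (B : ι → Finset H) (T : Finset H) (s : Finset ι)
    (hgreedy : ∀ i ∈ s, ∑ x ∈ T \ (s.filter (· < i)).biUnion B, w x
      ≤ ∑ x ∈ B i \ (s.filter (· < i)).biUnion B, w x) :
    #s • ∑ x ∈ T \ s.biUnion B, w x ≤ ∑ x ∈ s.biUnion B \ T, w x := by
  induction s using Finset.induction_on_max with
  | empty => simp
  | insert a s hlt ih =>
    have ha : a ∉ s := fun h => lt_irrefl a (hlt a h)
    have hbefore_a : (insert a s).filter (· < a) = s := by
      rw [filter_insert, if_neg (lt_irrefl a), filter_true_of_mem hlt]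
    have hbefore : ∀ i ∈ s, (insert a s).filter (· < i) = s.filter (· < i) := by
      intro i hi
      rw [filter_insert, if_neg (hlt i hi).not_gt]
    have ih := ih fun i hi => by simpa only [hbefore i hi] using hgreedy i (mem_insert_of_mem hi)
    have hstep := sum_sdiff_union_le_of_sum_sdiff_le w
      (by simpa only [hbefore_a] using hgreedy a (mem_insert_self a s))
    have hmono : ∑ x ∈ T \ (s.biUnion B ∪ B a), w x ≤ ∑ x ∈ T \ s.biUnion B, w x :=
      sum_le_sum_of_subset_of_nonneg (sdiff_subset_sdiff le_rfl subset_union_left)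
        fun x _ _ => hw x
    rw [biUnion_insert, card_insert_of_notMem ha, sum_union_sdiff, succ_nsmul, union_comm]
    exact add_le_add ((nsmul_le_nsmul_right hmono _).trans ih) hstep

end GreedyCover

theorem stmt13_general {H Y : Type*} [DecidableEq H]
    (w : H → ℝ) (hw : ∀ h, 0 ≤ w h)
    (A : Y → Finset H) (k : ℕ) (yh : Fin k → Y)
    (hgreedy : ∀ i : Fin k, ∀ y : Y, (∀ j : Fin k, j < i → yh j ≠ y) →
      ∑ h ∈ A y \ (Finset.univ.filter (fun j : Fin k => j < i)).biUnion (fun j => A (yh j)),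
          w h
        ≤ ∑ h ∈ A (yh i) \
            (Finset.univ.filter (fun j : Fin k => j < i)).biUnion (fun j => A (yh j)), w h)
    (y : Y) :
    (k : ℝ) * ∑ h ∈ A y \ Finset.univ.biUnion (fun i : Fin k => A (yh i)), w h
      ≤ ∑ h ∈ Finset.univ.biUnion (fun i : Fin k => A (yh i)) \ A y, w h := by
  have hgreedy_all : ∀ i ∈ (univ : Finset (Fin k)),
      ∑ h ∈ A y \ (univ.filter (· < i)).biUnion (fun j => A (yh j)), w h
        ≤ ∑ h ∈ A (yh i) \ (univ.filter (· < i)).biUnion (fun j => A (yh j)), w h := by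
    intro i _
    by_cases hnew : ∀ j : Fin k, j < i → yh j ≠ y
    · exact hgreedy i y hnew
    · obtain ⟨j, hji, rfl⟩ : ∃ j, j < i ∧ yh j = y := by simpa using hnew
      have hcovered : A (yh j) ⊆ (univ.filter (· < i)).biUnion (fun j => A (yh j)) :=
        subset_biUnion_of_mem (fun j => A (yh j)) (by simpa using hji)
      rw [sdiff_eq_empty_iff_subset.2 hcovered, sum_empty]
      exact sum_nonneg fun h _ => hw h
  simpa [nsmul_eq_mul] using
    card_nsmul_sum_sdiff_biUnion_le w hw (fun i => A (yh i)) (A y) univ hgreedy_all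

/-- Key greedy covering inequality: the weight of U \ A_y is at least k times
the weight of A_y \ U, where U is the union of the k greedily chosen slices. -/
theorem stmt13 {H Y : Type*} [DecidableEq H] [DecidableEq Y] [Fintype H]
    (w : H → ℝ) (hw : ∀ h, 0 ≤ w h)
    (A : Y → Finset H) (k : ℕ) (yh : Fin k → Y)
    (hgreedy : ∀ i : Fin k, ∀ y : Y, (∀ j : Fin k, j < i → yh j ≠ y) →
      ∑ h ∈ A y \ (Finset.univ.filter (fun j : Fin k => j < i)).biUnion (fun j => A (yh j)),
          w h
        ≤ ∑ h ∈ A (yh i) \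
            (Finset.univ.filter (fun j : Fin k => j < i)).biUnion (fun j => A (yh j)), w h)
    (y : Y) :
    (k : ℝ) * ∑ h ∈ A y \ Finset.univ.biUnion (fun i : Fin k => A (yh i)), w h
      ≤ ∑ h ∈ Finset.univ.biUnion (fun i : Fin k => A (yh i)) \ A y, w h :=
  stmt13_general w hw A k yh hgreedy y
end

section
/- The online pass@k algorithm—which at each round greedily outputs k labels covering maximal uncovered weight, zeroes weights of hypotheses inconsistent with the demonstration y_t, and multiplies by (k+1) the weights of hypotheses containing y_t but none of the k outputs—makes at most log_{k+1}|S| mistakes (rounds where none of the k outputs lies in σ*(x_t)) on any sequence realizable by some σ* ∈ S. -/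
/-!
Greedy covering pays for every reweighting. If `A` is the slice of the revealed label and
`U` the union of the `k` output slices, then the `i`-th output, chosen greedily when `A` was
still available, gained at least `w(A \ U)` new weight; subtracting what of that gain lies in `A`,
the `k` disjoint fresh gains show `k · w(A \ U) ≤ w(U \ A)`. Hence the new total
`w(A ∩ U) + (k + 1) · w(A \ U)` never exceeds the old one, so the total stays at most `|S|`,
while the weight of the realizing hypothesis is `(k + 1)^M` after `M` mistakes.
-/

open Finset

section Greedy

variable {ι H : Type*} [Fintype ι] [LinearOrder ι] [LocallyFiniteOrderBot ι] [DecidableEq H]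
  {w : H → ℝ} {A : Finset H} {S : ι → Finset H}

theorem sum_sdiff_sup_le_sum_disjointed_sdiff (hw : ∀ h, 0 ≤ w h) (i : ι)
    (hgreedy : ∑ h ∈ A \ (Iio i).sup S, w h ≤ ∑ h ∈ disjointed S i, w h) :
    ∑ h ∈ A \ univ.sup S, w h ≤ ∑ h ∈ disjointed S i \ A, w h := by
  have hdisj : Disjoint (A \ univ.sup S) (disjointed S i ∩ A) := by
    refine disjoint_left.2 fun h ha hd => (mem_sdiff.1 ha).2 ?_
    exact le_sup (f := S) (mem_univ i) (disjointed_le S i (mem_inter.1 hd).1)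
  have hsub : (A \ univ.sup S) ∪ (disjointed S i ∩ A) ⊆ A \ (Iio i).sup S := by
    refine union_subset (sdiff_subset_sdiff le_rfl (sup_mono (subset_univ _))) fun h hh => ?_
    rw [mem_inter, disjointed_apply, mem_sdiff] at hh
    exact mem_sdiff.2 ⟨hh.2, hh.1.2⟩
  have hle := sum_le_sum_of_subset_of_nonneg hsub fun h _ _ => hw h
  rw [sum_union hdisj] at hle
  linarith [sum_inter_add_sum_sdiff (disjointed S i) A w]

theorem card_mul_sum_sdiff_sup_le (hw : ∀ h, 0 ≤ w h)
    (hgreedy : ∀ i, ∑ h ∈ A \ (Iio i).sup S, w h ≤ ∑ h ∈ disjointed S i, w h) :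
    Fintype.card ι * ∑ h ∈ A \ univ.sup S, w h ≤ ∑ h ∈ univ.sup S \ A, w h := by
  have hpd : ((univ : Finset ι) : Set ι).PairwiseDisjoint fun i => disjointed S i \ A :=
    Set.PairwiseDisjoint.mono ((disjoint_disjointed S).set_pairwise _) fun _ => sdiff_subset
  have hsub : univ.biUnion (fun i => disjointed S i \ A) ⊆ univ.sup S \ A :=
    biUnion_subset.2 fun i _ =>
      sdiff_subset_sdiff ((disjointed_le S i).trans (le_sup (mem_univ i))) le_rfl
  calc Fintype.card ι * ∑ h ∈ A \ univ.sup S, w h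
      = ∑ _i : ι, ∑ h ∈ A \ univ.sup S, w h := by simp
    _ ≤ ∑ i, ∑ h ∈ disjointed S i \ A, w h :=
      sum_le_sum fun i _ => sum_sdiff_sup_le_sum_disjointed_sdiff hw i (hgreedy i)
    _ = ∑ h ∈ univ.biUnion (fun i => disjointed S i \ A), w h := (sum_biUnion hpd).symm
    _ ≤ ∑ h ∈ univ.sup S \ A, w h := sum_le_sum_of_subset_of_nonneg hsub fun h _ _ => hw h

theorem sum_inter_sup_add_mul_sum_sdiff_sup_le [Fintype H] (hw : ∀ h, 0 ≤ w h)
    (hgreedy : ∀ i, ∑ h ∈ A \ (Iio i).sup S, w h ≤ ∑ h ∈ disjointed S i, w h) :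
    ∑ h ∈ A ∩ univ.sup S, w h + (Fintype.card ι + 1) * ∑ h ∈ A \ univ.sup S, w h
      ≤ ∑ h, w h := by
  have hcover : ∑ h ∈ A, w h + ∑ h ∈ univ.sup S \ A, w h ≤ ∑ h, w h := by
    rw [← sum_union disjoint_sdiff]
    exact sum_le_sum_of_subset_of_nonneg (subset_univ _) fun h _ _ => hw h
  linarith [sum_inter_add_sum_sdiff A (univ.sup S) w, card_mul_sum_sdiff_sup_le hw hgreedy]

end Greedy

theorem sum_ite_mem_ite_mem {H R : Type*} [Fintype H] [DecidableEq H] [CommSemiring R]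
    (v : H → R) (A U : Finset H) (c : R) :
    ∑ h, (if h ∈ A then if h ∈ U then v h else c * v h else 0)
      = ∑ h ∈ A ∩ U, v h + c * ∑ h ∈ A \ U, v h := by
  rw [← sum_filter, sum_ite, mul_sum]
  simp [filter_mem_eq_inter, filter_notMem_eq_sdiff]

section PassAtK

variable {H X Y : Type*} [DecidableEq Y]
  {σ : H → X → Finset Y} {k : ℕ} {x : ℕ → X} {y : ℕ → Y} {yhat : ℕ → Fin k → Y} {w : ℕ → H → ℝ}

/-- The paper's slice `A_z^t`, for `a = x_t`. -/
def labelSlice [Fintype H] (σ : H → X → Finset Y) (a : X) (z : Y) : Finset H :=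
  univ.filter fun h => z ∈ σ h a

def IsGreedyPassAtK [Fintype H] [DecidableEq H] (σ : H → X → Finset Y) (k : ℕ) (x : ℕ → X)
    (yhat : ℕ → Fin k → Y) (w : ℕ → H → ℝ) : Prop :=
  ∀ t, ∀ i : Fin k, ∀ z : Y, (∀ j : Fin k, j < i → yhat t j ≠ z) →
    ∑ h ∈ labelSlice σ (x t) z \
        (univ.filter (· < i)).biUnion (fun j => labelSlice σ (x t) (yhat t j)), w t h
      ≤ ∑ h ∈ labelSlice σ (x t) (yhat t i) \
        (univ.filter (· < i)).biUnion (fun j => labelSlice σ (x t) (yhat t j)), w t h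

def IsPassAtKUpdate (σ : H → X → Finset Y) (k : ℕ) (x : ℕ → X) (y : ℕ → Y)
    (yhat : ℕ → Fin k → Y) (w : ℕ → H → ℝ) : Prop :=
  ∀ t h, w (t + 1) h =
    if y t ∉ σ h (x t) then 0
    else if ∃ i : Fin k, yhat t i ∈ σ h (x t) then w t h
    else (k + 1 : ℝ) * w t h

def mistakes (σ : H → X → Finset Y) (x : ℕ → X) (yhat : ℕ → Fin k → Y) (hstar : H) (T : ℕ) :
    Finset ℕ :=
  (range T).filter fun t => ∀ i : Fin k, yhat t i ∉ σ hstar (x t)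

theorem weight_nonneg (hupd : IsPassAtKUpdate σ k x y yhat w) (hw0 : ∀ h, 0 ≤ w 0 h) :
    ∀ t h, 0 ≤ w t h := by
  intro t
  induction t with
  | zero => exact hw0
  | succ t ih =>
    intro h
    rw [hupd]
    split_ifs
    · exact ih h
    · exact mul_nonneg (by positivity) (ih h)
    · exact le_rfl

theorem weight_eq_mul_pow_card_mistakes (hupd : IsPassAtKUpdate σ k x y yhat w) {hstar : H}
    (hreal : ∀ t, y t ∈ σ hstar (x t)) (T : ℕ) :
    w T hstar = w 0 hstar * (k + 1 : ℝ) ^ (mistakes σ x yhat hstar T).card := by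
  induction T with
  | zero => simp [mistakes]
  | succ T ih =>
    rw [hupd, if_neg (not_not_intro (hreal T)), mistakes, range_add_one, filter_insert]
    by_cases hhit : ∃ i : Fin k, yhat T i ∈ σ hstar (x T)
    · rw [if_pos hhit, if_neg (by simpa using hhit), ih, mistakes]
    · rw [if_neg hhit, if_pos (by simpa using hhit), card_insert_of_notMem (by simp), ih, mistakes,
        pow_succ]
      ring

theorem sum_weight_succ_le [Fintype H] [DecidableEq H] (hupd : IsPassAtKUpdate σ k x y yhat w)
    (hgreedy : IsGreedyPassAtK σ k x yhat w) (t : ℕ) (hw : ∀ h, 0 ≤ w t h) :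
    ∑ h, w (t + 1) h ≤ ∑ h, w t h := by
  set A := labelSlice σ (x t) (y t)
  set S := fun i => labelSlice σ (x t) (yhat t i)
  have hsum : ∑ h, w (t + 1) h
      = ∑ h ∈ A ∩ univ.sup S, w t h + (k + 1) * ∑ h ∈ A \ univ.sup S, w t h := by
    rw [← sum_ite_mem_ite_mem]
    refine sum_congr rfl fun h _ => ?_
    simp only [hupd t h, A, S, labelSlice, mem_filter, mem_univ, true_and, mem_sup]
    split_ifs <;> simp_all
  rw [hsum]
  by_cases hout : ∃ j, yhat t j = y t
  · obtain ⟨j, hj⟩ := hout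
    have hAU : A ⊆ univ.sup S := by
      simpa only [S, hj] using le_sup (f := S) (mem_univ j)
    rw [sdiff_eq_empty_iff_subset.2 hAU, sum_empty, mul_zero, add_zero]
    exact sum_le_sum_of_subset_of_nonneg (subset_univ _) fun h _ _ => hw h
  · have hgain (i : Fin k) :
        ∑ h ∈ A \ (Iio i).sup S, w t h ≤ ∑ h ∈ disjointed S i, w t h := by
      have := hgreedy t i (y t) fun j _ hj => hout ⟨j, hj⟩
      rwa [filter_gt_eq_Iio, ← sup_eq_biUnion] at this
    simpa using sum_inter_sup_add_mul_sum_sdiff_sup_le hw hgain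

theorem sum_weight_le_sum_weight_zero [Fintype H] [DecidableEq H]
    (hupd : IsPassAtKUpdate σ k x y yhat w) (hgreedy : IsGreedyPassAtK σ k x yhat w)
    (hw0 : ∀ h, 0 ≤ w 0 h) (T : ℕ) :
    ∑ h, w T h ≤ ∑ h, w 0 h :=
  antitone_nat_of_succ_le (f := fun t => ∑ h, w t h)
    (fun t => sum_weight_succ_le hupd hgreedy t (weight_nonneg hupd hw0 t)) (Nat.zero_le T)

end PassAtK

theorem stmt14_general {H X Y : Type*} [Fintype H] [DecidableEq H] [DecidableEq Y]
    (σ : H → X → Finset Y) (k : ℕ) (hk : 1 ≤ k)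
    (x : ℕ → X) (y : ℕ → Y) (yhat : ℕ → Fin k → Y)
    (w : ℕ → H → ℝ) (hw1 : ∀ h, w 0 h = 1)
    (hgreedy : ∀ t, ∀ i : Fin k, ∀ z : Y, (∀ j : Fin k, j < i → yhat t j ≠ z) →
      ∑ h ∈ (Finset.univ.filter (fun h => z ∈ σ h (x t))) \
          (Finset.univ.filter (fun j : Fin k => j < i)).biUnion
            (fun j => Finset.univ.filter (fun h => yhat t j ∈ σ h (x t))), w t h
        ≤ ∑ h ∈ (Finset.univ.filter (fun h => yhat t i ∈ σ h (x t))) \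
            (Finset.univ.filter (fun j : Fin k => j < i)).biUnion
              (fun j => Finset.univ.filter (fun h => yhat t j ∈ σ h (x t))), w t h)
    (hupd : ∀ t h, w (t + 1) h =
      if y t ∉ σ h (x t) then 0
      else if ∃ i : Fin k, yhat t i ∈ σ h (x t) then w t h
      else (k + 1 : ℝ) * w t h)
    (hstar : H) (hreal : ∀ t, y t ∈ σ hstar (x t))
    (T : ℕ) :
    (((Finset.range T).filter (fun t => ∀ i : Fin k, yhat t i ∉ σ hstar (x t))).card : ℝ)
      ≤ Real.logb (k + 1) (Fintype.card H) := by
  have hw0 : ∀ h, 0 ≤ w 0 h := fun h => (hw1 h).symm ▸ zero_le_one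
  have hpow : (k + 1 : ℝ) ^ (mistakes σ x yhat hstar T).card ≤ Fintype.card H := calc
    _ = w T hstar := by rw [weight_eq_mul_pow_card_mistakes hupd hreal, hw1, one_mul]
    _ ≤ ∑ h, w T h := single_le_sum (fun h _ => weight_nonneg hupd hw0 T h) (mem_univ hstar)
    _ ≤ ∑ h, w 0 h := sum_weight_le_sum_weight_zero hupd hgreedy hw0 T
    _ = Fintype.card H := by simp [hw1]
  have hbase : (1 : ℝ) < k + 1 := by norm_cast; omega
  rw [Real.le_logb_iff_rpow_le hbase ((by positivity : (0 : ℝ) < _).trans_le hpow),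
    Real.rpow_natCast]
  exact hpow

/-- Online pass@k mistake bound: the greedy weighted rule with (k+1)-fold reweighting
makes at most log_{k+1}|S| mistakes on any realizable sequence. -/
theorem stmt14 {H X Y : Type*} [Fintype H] [Nonempty H] [DecidableEq H] [DecidableEq Y]
    (σ : H → X → Finset Y) (k : ℕ) (hk : 1 ≤ k)
    (x : ℕ → X) (y : ℕ → Y) (yhat : ℕ → Fin k → Y)
    (w : ℕ → H → ℝ) (hw1 : ∀ h, w 0 h = 1)
    (hgreedy : ∀ t, ∀ i : Fin k, ∀ z : Y, (∀ j : Fin k, j < i → yhat t j ≠ z) →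
      ∑ h ∈ (Finset.univ.filter (fun h => z ∈ σ h (x t))) \
          (Finset.univ.filter (fun j : Fin k => j < i)).biUnion
            (fun j => Finset.univ.filter (fun h => yhat t j ∈ σ h (x t))), w t h
        ≤ ∑ h ∈ (Finset.univ.filter (fun h => yhat t i ∈ σ h (x t))) \
            (Finset.univ.filter (fun j : Fin k => j < i)).biUnion
              (fun j => Finset.univ.filter (fun h => yhat t j ∈ σ h (x t))), w t h)
    (hupd : ∀ t h, w (t + 1) h =
      if y t ∉ σ h (x t) then 0
      else if ∃ i : Fin k, yhat t i ∈ σ h (x t) then w t h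
      else (k + 1 : ℝ) * w t h)
    (hstar : H) (hreal : ∀ t, y t ∈ σ hstar (x t))
    (T : ℕ) :
    (((Finset.range T).filter (fun t => ∀ i : Fin k, yhat t i ∉ σ hstar (x t))).card : ℝ)
      ≤ Real.logb (k + 1) (Fintype.card H) :=
  stmt14_general σ k hk x y yhat w hw1 hgreedy hupd hstar hreal T
end

section
/- There exists a class S = {σ*} with |S| = 1, X = ℕ, Y = {0,1}, σ*(x) = {0,1} for all x (so the zero-loss objective is trivially achievable with zero samples), such that for every sample size m, taking D uniform on {1,…,2m}: for any estimator π̂ mapping samples to policies, sup over deterministic demonstrators π* ∈ Π_{σ*} of E_{S∼(D×π*)^m} E_{x∼D} D_TV(π*(·|x), π̂(·|x;S)) ≥ 1/4, where Π_{σ*} is the set of policies supported on σ*. -/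
/-! Average over the uniform prior on labelings `g : X → Fin 2`. At a context `x` missed by the
sample, `g` and its flip at `x` produce the same labeled sample, hence the same estimate, while
their Dirac targets at `x` are the two points of `Fin 2`; so the expected total variation at `x`
is `1/2`. A sample of size `m` misses at least `m` of the `2m` contexts, so the prior-averaged
risk is at least `1/4`, and some labeling attains the average. -/

open Finset Function

lemma half_sum_abs_indicator_sub_eq {Y : Type*} [Fintype Y] [DecidableEq Y] {Q : Y → ℝ}
    (hQ0 : ∀ y, 0 ≤ Q y) (hQ1 : ∑ y, Q y = 1) (b : Y) :
    (1 / 2 : ℝ) * ∑ y, |(if y = b then (1 : ℝ) else 0) - Q y| = 1 - Q b := by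
  have hb : Q b ≤ 1 := hQ1 ▸ single_le_sum (fun y _ => hQ0 y) (mem_univ b)
  have hrest : ∑ y ∈ univ.erase b, |(if y = b then (1 : ℝ) else 0) - Q y| = 1 - Q b := by
    rw [← hQ1, ← add_sum_erase univ Q (mem_univ b), add_sub_cancel_left]
    refine sum_congr rfl fun y hy => ?_
    rw [if_neg (ne_of_mem_erase hy), zero_sub, abs_neg, abs_of_nonneg (hQ0 y)]
  rw [← add_sum_erase _ _ (mem_univ b), hrest, if_pos rfl, abs_of_nonneg (sub_nonneg.2 hb)]
  ring

lemma Fin.sum_univ_two_eq_add_apply_add_one {M : Type*} [AddCommMonoid M] (Q : Fin 2 → M)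
    (b : Fin 2) : ∑ y, Q y = Q b + Q (b + 1) := by
  fin_cases b <;> simp [Fin.sum_univ_two, add_comm]

lemma Function.Involutive.sum_eq_card_mul_div_two {α : Type*} [Fintype α] {σ : α → α}
    (hσ : Involutive σ) {F : α → ℝ} {c : ℝ} (h : ∀ a, F a + F (σ a) = c) :
    ∑ a, F a = Fintype.card α * c / 2 := by
  have hperm : ∑ a, F (σ a) = ∑ a, F a := Equiv.sum_comp (hσ.toPerm σ) F
  have htwice : ∑ a, F a + ∑ a, F (σ a) = Fintype.card α * c := by
    rw [← sum_add_distrib, sum_congr rfl fun a _ => h a, sum_const, card_univ, nsmul_eq_mul]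
  linarith

section Demonstrators

variable {ι X : Type*} [DecidableEq X]

def labeledSample (xs : ι → X) (g : X → Fin 2) : ι → X × Fin 2 := fun i => (xs i, g (xs i))

def flipAt (x : X) (g : X → Fin 2) : X → Fin 2 := update g x (g x + 1)

lemma flipAt_involutive (x : X) : Involutive (flipAt x) := by
  intro g
  have hb : g x + 1 + 1 = g x := by generalize g x = b; fin_cases b <;> rfl
  simp [flipAt, hb]

lemma labeledSample_flipAt {xs : ι → X} {x : X} (hx : x ∉ Set.range xs) (g : X → Fin 2) :
    labeledSample xs (flipAt x g) = labeledSample xs g := by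
  funext i
  have hi : xs i ≠ x := fun h => hx ⟨i, h⟩
  simp [labeledSample, flipAt, update_of_ne hi]

lemma sum_one_sub_apply_labeledSample_of_notMem_range [Fintype X]
    {est : (ι → X × Fin 2) → X → Fin 2 → ℝ} (hest : ∀ s x, ∑ y, est s x y = 1)
    {xs : ι → X} {x : X} (hx : x ∉ Set.range xs) :
    ∑ g : X → Fin 2, (1 - est (labeledSample xs g) x (g x)) = 2 ^ Fintype.card X / 2 := by
  have hpair : ∀ g, (1 - est (labeledSample xs g) x (g x))
      + (1 - est (labeledSample xs (flipAt x g)) x (flipAt x g x)) = 1 := by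
    intro g
    have hsplit := Fin.sum_univ_two_eq_add_apply_add_one (est (labeledSample xs g) x) (g x)
    rw [labeledSample_flipAt hx, flipAt, update_self]
    linarith [hest (labeledSample xs g) x]
  rw [(flipAt_involutive x).sum_eq_card_mul_div_two hpair]
  simp

lemma card_sub_card_le_card_compl_image [Fintype ι] [Fintype X] (xs : ι → X) :
    (Fintype.card X : ℝ) - Fintype.card ι ≤ #(univ.image xs)ᶜ := by
  rw [card_compl, Nat.cast_sub (card_le_univ _)]
  exact sub_le_sub_left (by exact_mod_cast card_image_le.trans_eq card_univ) _

lemma card_sub_card_mul_le_sum_tv [Fintype ι] [Fintype X]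
    {est : (ι → X × Fin 2) → X → Fin 2 → ℝ} (hest0 : ∀ s x y, 0 ≤ est s x y)
    (hest1 : ∀ s x, ∑ y, est s x y = 1) (xs : ι → X) :
    ((Fintype.card X : ℝ) - Fintype.card ι) * (2 ^ Fintype.card X / 2) ≤
      ∑ x, ∑ g : X → Fin 2,
        (1 / 2 : ℝ) * ∑ y, |(if y = g x then (1 : ℝ) else 0) - est (labeledSample xs g) x y| := by
  calc ((Fintype.card X : ℝ) - Fintype.card ι) * (2 ^ Fintype.card X / 2)
      ≤ #(univ.image xs)ᶜ * (2 ^ Fintype.card X / 2) := by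
        gcongr; exact card_sub_card_le_card_compl_image xs
    _ = ∑ x ∈ (univ.image xs)ᶜ, ∑ g : X → Fin 2,
          (1 / 2 : ℝ) * ∑ y, |(if y = g x then (1 : ℝ) else 0) - est (labeledSample xs g) x y| := by
        rw [← nsmul_eq_mul, ← sum_const]
        refine sum_congr rfl fun x hx => ?_
        have hx' : x ∉ Set.range xs := by simpa using hx
        simp only [half_sum_abs_indicator_sub_eq (hest0 _ _) (hest1 _ _)]
        exact (sum_one_sub_apply_labeledSample_of_notMem_range hest1 hx').symm
    _ ≤ _ := sum_le_sum_of_subset_of_nonneg (subset_univ _) fun _ _ _ => by positivity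

lemma exists_labeling_le_expected_tv [Fintype ι] [DecidableEq ι] [Fintype X] [Nonempty X]
    {est : (ι → X × Fin 2) → X → Fin 2 → ℝ} (hest0 : ∀ s x y, 0 ≤ est s x y)
    (hest1 : ∀ s x, ∑ y, est s x y = 1) :
    ∃ g : X → Fin 2, ((Fintype.card X : ℝ) - Fintype.card ι) / (2 * Fintype.card X) ≤
      (1 / (Fintype.card X : ℝ) ^ Fintype.card ι) * ∑ xs : ι → X, (1 / (Fintype.card X : ℝ)) *
        ∑ x, (1 / 2 : ℝ) * ∑ y,
          |(if y = g x then (1 : ℝ) else 0) - est (labeledSample xs g) x y| := by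
  set n : ℝ := (Fintype.card X : ℝ)
  have hn : n ≠ 0 := Nat.cast_ne_zero.2 Fintype.card_ne_zero
  have htotal : n ^ Fintype.card ι * ((n - Fintype.card ι) * (2 ^ Fintype.card X / 2)) ≤
      ∑ g : X → Fin 2, ∑ xs : ι → X, ∑ x, (1 / 2 : ℝ) * ∑ y,
        |(if y = g x then (1 : ℝ) else 0) - est (labeledSample xs g) x y| := by
    calc n ^ Fintype.card ι * ((n - Fintype.card ι) * (2 ^ Fintype.card X / 2))
        = ∑ _xs : ι → X, (n - Fintype.card ι) * (2 ^ Fintype.card X / 2) := by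
          simp [n]
      _ ≤ ∑ xs : ι → X, ∑ x, ∑ g : X → Fin 2, (1 / 2 : ℝ) * ∑ y,
            |(if y = g x then (1 : ℝ) else 0) - est (labeledSample xs g) x y| :=
          sum_le_sum fun xs _ => card_sub_card_mul_le_sum_tv hest0 hest1 xs
      _ = _ := (sum_congr rfl fun _ _ => sum_comm).trans sum_comm
  refine exists_le_of_sum_le univ_nonempty ?_ |>.imp fun _ => And.right
  simp only [← mul_sum] at htotal ⊢
  calc ∑ _g : X → Fin 2, (n - Fintype.card ι) / (2 * n)
      = 1 / n ^ Fintype.card ι *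
          (1 / n * (n ^ Fintype.card ι * ((n - Fintype.card ι) * (2 ^ Fintype.card X / 2)))) := by
        simp only [sum_const, card_univ, Fintype.card_fun, Fintype.card_fin, nsmul_eq_mul]
        field_simp
        push_cast
        ring
    _ ≤ _ := by gcongr

end Demonstrators

/-- Impossibility of distribution matching: with σ*(x) = {0,1} on all of ℕ and D uniform on
{1,…,2m}, any estimator has worst-case expected TV distance to some deterministic optimal
demonstrator at least 1/4. -/
theorem stmt18 (m : ℕ) (hm : 1 ≤ m)
    (Est : (Fin m → ℕ × Fin 2) → ℕ → Fin 2 → ℝ)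
    (hE0 : ∀ s x y, 0 ≤ Est s x y) (hE1 : ∀ s x, Est s x 0 + Est s x 1 = 1) :
    ∃ f : ℕ → Fin 2,
      (1 / 4 : ℝ) ≤
        (1 / (2 * m : ℝ) ^ m) * ∑ xs : Fin m → Fin (2 * m),
          (1 / (2 * m : ℝ)) * ∑ x : Fin (2 * m),
            (1 / 2 : ℝ) * ∑ y : Fin 2,
              |(if y = f ((x : ℕ) + 1) then (1 : ℝ) else 0)
                - Est (fun i => ((xs i : ℕ) + 1, f ((xs i : ℕ) + 1))) ((x : ℕ) + 1) y| := by
  have : Nonempty (Fin (2 * m)) := ⟨⟨0, by omega⟩⟩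
  let est (s : Fin m → Fin (2 * m) × Fin 2) (x : Fin (2 * m)) : Fin 2 → ℝ :=
    Est (fun i => (((s i).1 : ℕ) + 1, (s i).2)) ((x : ℕ) + 1)
  obtain ⟨g, hg⟩ := exists_labeling_le_expected_tv (est := est) (fun _ _ _ => hE0 _ _ _)
    (fun _ _ => (Fin.sum_univ_two _).trans (hE1 _ _))
  have hquarter : ((2 * m : ℕ) - m : ℝ) / (2 * (2 * m : ℕ)) = 1 / 4 := by
    have : (m : ℝ) ≠ 0 := Nat.cast_ne_zero.2 (by omega)
    push_cast
    field_simp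
    ring
  refine ⟨fun k => if h : k - 1 < 2 * m then g ⟨k - 1, h⟩ else 0, ?_⟩
  simp only [Fintype.card_fin, hquarter] at hg
  simpa [est, labeledSample] using hg
end
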